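/- arXiv:1104.4285 — 7 statements merged into one kernel-verified Lean document; each statement's English description precedes it below -/
import Mathlib

section
/- Let ℒ, 𝒵, ℳ be nonempty finite sets, let P_{LZ} be a joint probability distribution on ℒ × 𝒵, and let (𝓕, μ) be a two-universal family of hash functions from ℒ to ℳ. For f ∈ 𝓕 define the joint distribution q_f on ℳ × 𝒵 by q_f(m, z) = ∑_{ℓ : f(ℓ) = m} P_{LZ}(ℓ, z), and write P_Z(z) = ∑_ℓ P_{LZ}(ℓ, z). Then for every ρ with 0 < ρ ≤ 1, ∑_{f ∈ 𝓕} μ(f) · exp(ρ · I(q_f)) ≤ 1 + |ℳ|^ρ · ∑_{(ℓ,z) : P_Z(z) > 0} P_{LZ}(ℓ, z) · (P_{LZ}(ℓ, z) / P_Z(z))^ρ. -/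
open Finset

/-- Mutual information of a joint distribution `q` on `A × B` (natural logarithm);
terms with `q (a, b) = 0` contribute `0` since `0 * log _ = 0`. -/
noncomputable def mutInfo {A B : Type*} [Fintype A] [Fintype B] (q : A × B → ℝ) : ℝ :=
  ∑ p : A × B, q p * Real.log (q p / ((∑ b, q (p.1, b)) * (∑ a, q (a, p.2))))

/-!
Write `I(q_f) = H(M) - H(M | Z)`. The entropy `H(M)` is at most `log |M|`, and by concavity of
`log`, `exp (-ρ H(M | Z)) ≤ ∑ q_f (q_f / P_Z)^ρ`. Pulled back to `L × Z`, the mass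
`q_f (f ℓ, z)` is `P_{LZ}(ℓ, z)` plus the mass of the other preimages colliding with `ℓ`.
Subadditivity of `t ↦ t^ρ` separates the two, and by concavity of `t ↦ t^ρ` and
two-universality the average collision term, relative to `P_Z(z)`, is at most `|M|^(-ρ)`.
-/

theorem nonempty_of_sum_eq_one {ι : Type*} [Fintype ι] (w : ι → ℝ) (hw1 : ∑ i, w i = 1) :
    Nonempty ι :=
  let ⟨i, _⟩ := exists_ne_zero_of_sum_ne_zero (hw1.trans_ne one_ne_zero)
  ⟨i⟩

theorem exp_sum_mul_log_le_sum_mul {ι : Type*} (s : Finset ι) (w Y : ι → ℝ)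
    (hw : ∀ i ∈ s, 0 ≤ w i) (hw1 : ∑ i ∈ s, w i = 1) (hY : ∀ i ∈ s, 0 ≤ Y i)
    (hpos : ∀ i ∈ s, w i ≠ 0 → 0 < Y i) :
    Real.exp (∑ i ∈ s, w i * Real.log (Y i)) ≤ ∑ i ∈ s, w i * Y i := by
  rw [Real.exp_sum]
  calc ∏ i ∈ s, Real.exp (w i * Real.log (Y i)) = ∏ i ∈ s, Y i ^ w i := by
        refine prod_congr rfl fun i hi => ?_
        rcases eq_or_ne (w i) 0 with h | h
        · simp [h]
        · rw [Real.rpow_def_of_pos (hpos i hi h), mul_comm]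
    _ ≤ ∑ i ∈ s, w i * Y i := Real.geom_mean_le_arith_mean_weighted s w Y hw hw1 hY

theorem sum_mul_log_inv_le_log_card {ι : Type*} [Fintype ι] (w : ι → ℝ) (hw : ∀ i, 0 ≤ w i)
    (hw1 : ∑ i, w i = 1) : ∑ i, w i * Real.log (w i)⁻¹ ≤ Real.log (Fintype.card ι) := by
  have := nonempty_of_sum_eq_one w hw1
  rw [Real.le_log_iff_exp_le (Nat.cast_pos.2 Fintype.card_pos)]
  calc Real.exp (∑ i, w i * Real.log (w i)⁻¹) ≤ ∑ i, w i * (w i)⁻¹ :=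
        exp_sum_mul_log_le_sum_mul univ w (fun i => (w i)⁻¹) (fun i _ => hw i) hw1
          (fun i _ => inv_nonneg.2 (hw i)) (fun i _ h => inv_pos.2 ((hw i).lt_of_ne' h))
    _ ≤ ∑ _i : ι, (1 : ℝ) := sum_le_sum fun i _ => mul_inv_le_one
    _ = Fintype.card ι := by simp

section MutualInformation

variable {A B : Type*} [Fintype A] [Fintype B] (q : A × B → ℝ)

theorem mutInfo_le_log_card_add (hq : ∀ p, 0 ≤ q p) (hq1 : ∑ p, q p = 1) :
    mutInfo q ≤ Real.log (Fintype.card A) + ∑ p, q p * Real.log (q p / ∑ a, q (a, p.2)) := by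
  set qA : A → ℝ := fun a => ∑ b, q (a, b)
  have hsplit : mutInfo q = ∑ a, qA a * Real.log (qA a)⁻¹ +
      ∑ p, q p * Real.log (q p / ∑ a, q (a, p.2)) := by
    simp only [qA, sum_mul]
    rw [← Fintype.sum_prod_type (fun p => q p * Real.log (qA p.1)⁻¹), ← sum_add_distrib]
    refine sum_congr rfl fun p _ => ?_
    rcases (hq p).eq_or_lt with h | h
    · simp [← h]
    have hqA : 0 < qA p.1 := h.trans_le (single_le_sum (fun b _ => hq (p.1, b)) (mem_univ p.2))
    have hqB : 0 < ∑ a, q (a, p.2) :=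
      h.trans_le (single_le_sum (fun a _ => hq (a, p.2)) (mem_univ p.1))
    rw [← mul_add, ← Real.log_mul (inv_pos.2 hqA).ne' (div_pos h hqB).ne']
    congr 2
    ring
  rw [hsplit]
  gcongr
  exact sum_mul_log_inv_le_log_card qA (fun a => sum_nonneg fun b _ => hq (a, b))
    (by rw [← hq1, Fintype.sum_prod_type])

theorem exp_mul_mutInfo_le (hq : ∀ p, 0 ≤ q p) (hq1 : ∑ p, q p = 1) {ρ : ℝ} (hρ : 0 ≤ ρ) :
    Real.exp (ρ * mutInfo q) ≤
      (Fintype.card A : ℝ) ^ ρ * ∑ p, q p * (q p / ∑ a, q (a, p.2)) ^ ρ := by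
  have hcond : ρ * ∑ p, q p * Real.log (q p / ∑ a, q (a, p.2)) =
      ∑ p, q p * Real.log ((q p / ∑ a, q (a, p.2)) ^ ρ) := by
    rw [mul_sum]
    refine sum_congr rfl fun p _ => ?_
    rcases (hq p).eq_or_lt with h | h
    · simp [← h]
    rw [Real.log_rpow (div_pos h (h.trans_le
      (single_le_sum (fun a _ => hq (a, p.2)) (mem_univ p.1))))]
    ring
  have : Nonempty A := (nonempty_of_sum_eq_one q hq1).map Prod.fst
  calc Real.exp (ρ * mutInfo q)
      ≤ Real.exp (ρ * (Real.log (Fintype.card A) +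
          ∑ p, q p * Real.log (q p / ∑ a, q (a, p.2)))) := by
        gcongr
        exact mutInfo_le_log_card_add q hq hq1
    _ = (Fintype.card A : ℝ) ^ ρ *
          Real.exp (∑ p, q p * Real.log ((q p / ∑ a, q (a, p.2)) ^ ρ)) := by
        rw [mul_add, Real.exp_add, hcond, mul_comm ρ, Real.exp_mul,
          Real.exp_log (Nat.cast_pos.2 Fintype.card_pos)]
    _ ≤ (Fintype.card A : ℝ) ^ ρ * ∑ p, q p * (q p / ∑ a, q (a, p.2)) ^ ρ := by
        gcongr
        refine exp_sum_mul_log_le_sum_mul univ q _ (fun p _ => hq p) hq1 (fun p _ => ?_)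
          (fun p _ h => ?_)
        · exact Real.rpow_nonneg (div_nonneg (hq p) (sum_nonneg fun a _ => hq (a, p.2))) ρ
        · have hp := (hq p).lt_of_ne' h
          exact Real.rpow_pos_of_pos (div_pos hp (hp.trans_le
            (single_le_sum (fun a _ => hq (a, p.2)) (mem_univ p.1)))) ρ

end MutualInformation

section Pushforward

variable {L M Z : Type*} [Fintype L] [DecidableEq M]

def pushFst (h : L → M) (P : L × Z → ℝ) : M × Z → ℝ :=
  fun p => ∑ ℓ with h ℓ = p.1, P (ℓ, p.2)

variable (h : L → M) (P : L × Z → ℝ)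

theorem pushFst_nonneg (hP : ∀ p, 0 ≤ P p) (p : M × Z) : 0 ≤ pushFst h P p :=
  sum_nonneg fun ℓ _ => hP (ℓ, p.2)

theorem sum_pushFst_fst [Fintype M] (z : Z) : ∑ m, pushFst h P (m, z) = ∑ ℓ, P (ℓ, z) :=
  sum_fiberwise univ h fun ℓ => P (ℓ, z)

theorem sum_pushFst_mul [Fintype M] [Fintype Z] (g : M × Z → ℝ) :
    ∑ p, pushFst h P p * g p = ∑ p : L × Z, P p * g (h p.1, p.2) := by
  rw [Fintype.sum_prod_type_right, Fintype.sum_prod_type_right]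
  refine sum_congr rfl fun z _ => ?_
  simp only [pushFst, sum_mul]
  rw [← sum_fiberwise univ h fun ℓ => P (ℓ, z) * g (h ℓ, z)]
  refine sum_congr rfl fun m _ => sum_congr rfl fun ℓ hℓ => ?_
  rw [(mem_filter.1 hℓ).2]

theorem exp_mul_mutInfo_pushFst_le [Fintype M] [Fintype Z] (hP : ∀ p, 0 ≤ P p)
    (hP1 : ∑ p, P p = 1) {ρ : ℝ} (hρ : 0 ≤ ρ) :
    Real.exp (ρ * mutInfo (pushFst h P)) ≤ (Fintype.card M : ℝ) ^ ρ *
      ∑ p : L × Z, P p * (∑ ℓ with h ℓ = h p.1, P (ℓ, p.2) / ∑ ℓ, P (ℓ, p.2)) ^ ρ := by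
  have hq1 : ∑ p, pushFst h P p = 1 := by simpa [hP1] using sum_pushFst_mul h P 1
  have := exp_mul_mutInfo_le (pushFst h P) (pushFst_nonneg h P hP) hq1 hρ
  simp only [sum_pushFst_fst] at this
  rw [sum_pushFst_mul h P fun p => (pushFst h P p / _) ^ ρ] at this
  simpa only [pushFst, sum_div] using this

end Pushforward

section UniversalHashing

variable {L M F : Type*} [Fintype L] [Fintype M] [Fintype F] [DecidableEq M]

def IsTwoUniversal (hash : F → L → M) (μ : F → ℝ) : Prop :=
  ∀ x₁ x₂ : L, x₁ ≠ x₂ →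
    ∑ f ∈ univ.filter (fun f => hash f x₁ = hash f x₂), μ f ≤ 1 / (Fintype.card M : ℝ)

variable {hash : F → L → M} {μ : F → ℝ}

theorem IsTwoUniversal.sum_mul_sum_collision_le [DecidableEq L] (h2u : IsTwoUniversal hash μ)
    (w : L → ℝ) (hw : ∀ ℓ, 0 ≤ w ℓ) (ℓ : L) :
    ∑ f, μ f * ∑ ℓ' ∈ univ.erase ℓ with hash f ℓ' = hash f ℓ, w ℓ' ≤
      (∑ ℓ', w ℓ') / Fintype.card M := by
  calc ∑ f, μ f * ∑ ℓ' ∈ univ.erase ℓ with hash f ℓ' = hash f ℓ, w ℓ'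
      = ∑ ℓ' ∈ univ.erase ℓ, (∑ f with hash f ℓ' = hash f ℓ, μ f) * w ℓ' := by
        simp only [sum_filter, mul_sum, sum_mul]
        rw [sum_comm]
        refine sum_congr rfl fun ℓ' _ => sum_congr rfl fun f _ => ?_
        split_ifs <;> simp
    _ ≤ ∑ ℓ' ∈ univ.erase ℓ, 1 / Fintype.card M * w ℓ' :=
        sum_le_sum fun ℓ' hℓ' =>
          mul_le_mul_of_nonneg_right (h2u ℓ' ℓ (ne_of_mem_erase hℓ')) (hw ℓ')
    _ ≤ (∑ ℓ', w ℓ') / Fintype.card M := by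
        rw [← mul_sum, one_div_mul_eq_div]
        exact div_le_div_of_nonneg_right (sum_le_univ_sum_of_nonneg hw) (Nat.cast_nonneg _)

theorem IsTwoUniversal.sum_mul_rpow_sum_fiber_le (h2u : IsTwoUniversal hash μ)
    (hμ : ∀ f, 0 ≤ μ f) (hμ1 : ∑ f, μ f = 1) (w : L → ℝ) (hw : ∀ ℓ, 0 ≤ w ℓ) {ρ : ℝ}
    (hρ0 : 0 ≤ ρ) (hρ1 : ρ ≤ 1) (ℓ : L) :
    ∑ f, μ f * (∑ ℓ' with hash f ℓ' = hash f ℓ, w ℓ') ^ ρ ≤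
      w ℓ ^ ρ + ((∑ ℓ', w ℓ') / Fintype.card M) ^ ρ := by
  classical
  have hfiber : ∀ f, ∑ ℓ' with hash f ℓ' = hash f ℓ, w ℓ' =
      w ℓ + ∑ ℓ' ∈ univ.erase ℓ with hash f ℓ' = hash f ℓ, w ℓ' := fun f => by
    rw [add_comm, filter_erase]
    exact (sum_erase_add _ w (by simp)).symm
  set c : F → ℝ := fun f => ∑ ℓ' ∈ univ.erase ℓ with hash f ℓ' = hash f ℓ, w ℓ'
  have hc : ∀ f, 0 ≤ c f := fun f => sum_nonneg fun ℓ' _ => hw ℓ'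
  calc ∑ f, μ f * (∑ ℓ' with hash f ℓ' = hash f ℓ, w ℓ') ^ ρ
      ≤ ∑ f, μ f * (w ℓ ^ ρ + c f ^ ρ) := by
        gcongr with f
        · exact hμ f
        rw [hfiber]
        exact Real.rpow_add_le_add_rpow (hw ℓ) (hc f) hρ0 hρ1
    _ = w ℓ ^ ρ + ∑ f, μ f * c f ^ ρ := by
        simp only [mul_add, sum_add_distrib, ← sum_mul, hμ1, one_mul]
    _ ≤ w ℓ ^ ρ + (∑ f, μ f * c f) ^ ρ := by
        gcongr
        simpa using (Real.concaveOn_rpow hρ0 hρ1).le_map_sum (fun f _ => hμ f) hμ1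
          fun f _ => Set.mem_Ici.2 (hc f)
    _ ≤ w ℓ ^ ρ + ((∑ ℓ', w ℓ') / Fintype.card M) ^ ρ := by
        gcongr
        · exact sum_nonneg fun f _ => mul_nonneg (hμ f) (hc f)
        exact h2u.sum_mul_sum_collision_le w hw ℓ

theorem IsTwoUniversal.sum_mul_sum_mul_rpow_cond_le {Z : Type*} [Fintype Z]
    (h2u : IsTwoUniversal hash μ) (hμ : ∀ f, 0 ≤ μ f) (hμ1 : ∑ f, μ f = 1) (P : L × Z → ℝ)
    (hP : ∀ p, 0 ≤ P p) (hP1 : ∑ p, P p = 1) {ρ : ℝ} (hρ0 : 0 ≤ ρ) (hρ1 : ρ ≤ 1) :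
    ∑ f, μ f * ∑ p : L × Z,
        P p * (∑ ℓ with hash f ℓ = hash f p.1, P (ℓ, p.2) / ∑ ℓ', P (ℓ', p.2)) ^ ρ ≤
      ∑ p, P p * (P p / ∑ ℓ, P (ℓ, p.2)) ^ ρ + (1 / Fintype.card M) ^ ρ := by
  set w : Z → L → ℝ := fun z ℓ => P (ℓ, z) / ∑ ℓ', P (ℓ', z)
  have hw : ∀ z ℓ, 0 ≤ w z ℓ := fun z ℓ => div_nonneg (hP _) (sum_nonneg fun ℓ' _ => hP _)
  have hw1 : ∀ z, ∑ ℓ, w z ℓ ≤ 1 := fun z => by rw [← sum_div]; exact div_self_le_one _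
  calc ∑ f, μ f * ∑ p : L × Z, P p * (∑ ℓ with hash f ℓ = hash f p.1, w p.2 ℓ) ^ ρ
      = ∑ p : L × Z, P p * ∑ f, μ f * (∑ ℓ with hash f ℓ = hash f p.1, w p.2 ℓ) ^ ρ := by
        simp_rw [mul_sum]
        rw [sum_comm]
        exact sum_congr rfl fun p _ => sum_congr rfl fun f _ => by ring
    _ ≤ ∑ p : L × Z, P p * (w p.2 p.1 ^ ρ + (1 / Fintype.card M) ^ ρ) := by
        gcongr with p
        · exact hP p
        refine (h2u.sum_mul_rpow_sum_fiber_le hμ hμ1 _ (hw p.2) hρ0 hρ1 p.1).trans ?_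
        gcongr
        · exact div_nonneg (sum_nonneg fun ℓ _ => hw p.2 ℓ) (Nat.cast_nonneg _)
        exact hw1 p.2
    _ = ∑ p, P p * (P p / ∑ ℓ, P (ℓ, p.2)) ^ ρ + (1 / Fintype.card M) ^ ρ := by
        simp only [mul_add, sum_add_distrib, ← sum_mul, hP1, one_mul, w]

end UniversalHashing

theorem privacy_amplification_general
    {L Z M F : Type*} [Fintype L] [Fintype Z] [Fintype M] [Fintype F]
    [Nonempty M] [DecidableEq M]
    (PLZ : L × Z → ℝ)
    (hPnn : ∀ p, 0 ≤ PLZ p) (hPsum : ∑ p, PLZ p = 1)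
    (hash : F → L → M) (μ : F → ℝ)
    (hμnn : ∀ f, 0 ≤ μ f) (hμsum : ∑ f, μ f = 1)
    (h2u : ∀ x₁ x₂ : L, x₁ ≠ x₂ →
      ∑ f ∈ univ.filter (fun f => hash f x₁ = hash f x₂), μ f ≤ 1 / (Fintype.card M : ℝ))
    (PZ : Z → ℝ) (hPZ : ∀ z, PZ z = ∑ ℓ, PLZ (ℓ, z))
    (q : F → M × Z → ℝ)
    (hq : ∀ f m z, q f (m, z) = ∑ ℓ ∈ univ.filter (fun ℓ => hash f ℓ = m), PLZ (ℓ, z))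
    (ρ : ℝ) (hρ0 : 0 < ρ) (hρ1 : ρ ≤ 1) :
    ∑ f, μ f * Real.exp (ρ * mutInfo (q f)) ≤
      1 + (Fintype.card M : ℝ) ^ ρ *
        ∑ p ∈ univ.filter (fun p : L × Z => 0 < PZ p.2),
          PLZ p * (PLZ p / PZ p.2) ^ ρ := by
  obtain rfl : PZ = fun z => ∑ ℓ, PLZ (ℓ, z) := funext hPZ
  obtain rfl : q = fun f => pushFst (hash f) PLZ := funext fun f => funext fun p => hq f p.1 p.2
  set N : ℝ := (Fintype.card M : ℝ)
  have hN : 0 < N := Nat.cast_pos.2 Fintype.card_pos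
  have hR : ∑ p ∈ univ.filter (fun p : L × Z => 0 < ∑ ℓ, PLZ (ℓ, p.2)),
      PLZ p * (PLZ p / ∑ ℓ, PLZ (ℓ, p.2)) ^ ρ = ∑ p, PLZ p * (PLZ p / ∑ ℓ, PLZ (ℓ, p.2)) ^ ρ := by
    refine sum_filter_of_ne fun p _ hp => (sum_nonneg fun ℓ _ => hPnn _).lt_of_ne' fun h => ?_
    simp [h, Real.zero_rpow hρ0.ne'] at hp
  calc ∑ f, μ f * Real.exp (ρ * mutInfo (pushFst (hash f) PLZ))
      ≤ ∑ f, μ f * (N ^ ρ * ∑ p : L × Z,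
          PLZ p * (∑ ℓ with hash f ℓ = hash f p.1, PLZ (ℓ, p.2) / ∑ ℓ', PLZ (ℓ', p.2)) ^ ρ) := by
        gcongr with f
        · exact hμnn f
        exact exp_mul_mutInfo_pushFst_le (hash f) PLZ hPnn hPsum hρ0.le
    _ = N ^ ρ * ∑ f, μ f * ∑ p : L × Z,
          PLZ p * (∑ ℓ with hash f ℓ = hash f p.1, PLZ (ℓ, p.2) / ∑ ℓ', PLZ (ℓ', p.2)) ^ ρ := by
        rw [mul_sum]
        exact sum_congr rfl fun f _ => by ring
    _ ≤ N ^ ρ * (∑ p, PLZ p * (PLZ p / ∑ ℓ, PLZ (ℓ, p.2)) ^ ρ + (1 / N) ^ ρ) := by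
        gcongr
        exact IsTwoUniversal.sum_mul_sum_mul_rpow_cond_le h2u hμnn hμsum PLZ hPnn hPsum hρ0.le hρ1
    _ = _ := by
        rw [mul_add, ← Real.mul_rpow hN.le (by positivity), mul_one_div_cancel hN.ne',
          Real.one_rpow, hR, add_comm]

/-- Privacy amplification theorem: for a two-universal family `(𝓕, μ)` of hash functions
from `L` to `M` and a joint distribution `P_{LZ}` on `L × Z`,
`∑_f μ(f) exp(ρ I(q_f)) ≤ 1 + |M|^ρ ∑_{ℓ,z : P_Z(z)>0} P_{LZ}(ℓ,z) (P_{LZ}(ℓ,z)/P_Z(z))^ρ`. -/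
theorem privacy_amplification
    {L Z M F : Type*} [Fintype L] [Fintype Z] [Fintype M] [Fintype F]
    [Nonempty L] [Nonempty Z] [Nonempty M] [Nonempty F] [DecidableEq M]
    (PLZ : L × Z → ℝ)
    (hPnn : ∀ p, 0 ≤ PLZ p) (hPsum : ∑ p, PLZ p = 1)
    (hash : F → L → M) (μ : F → ℝ)
    (hμnn : ∀ f, 0 ≤ μ f) (hμsum : ∑ f, μ f = 1)
    (h2u : ∀ x₁ x₂ : L, x₁ ≠ x₂ →
      ∑ f ∈ univ.filter (fun f => hash f x₁ = hash f x₂), μ f ≤ 1 / (Fintype.card M : ℝ))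
    (PZ : Z → ℝ) (hPZ : ∀ z, PZ z = ∑ ℓ, PLZ (ℓ, z))
    (q : F → M × Z → ℝ)
    (hq : ∀ f m z, q f (m, z) = ∑ ℓ ∈ univ.filter (fun ℓ => hash f ℓ = m), PLZ (ℓ, z))
    (ρ : ℝ) (hρ0 : 0 < ρ) (hρ1 : ρ ≤ 1) :
    ∑ f, μ f * Real.exp (ρ * mutInfo (q f)) ≤
      1 + (Fintype.card M : ℝ) ^ ρ *
        ∑ p ∈ univ.filter (fun p : L × Z => 0 < PZ p.2),
          PLZ p * (PLZ p / PZ p.2) ^ ρ :=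
  privacy_amplification_general PLZ hPnn hPsum hash μ hμnn hμsum h2u PZ hPZ q hq ρ hρ0 hρ1
end

section
/- Let ℒ and 𝒵 be nonempty finite sets, W a channel from ℒ to 𝒵, P a probability distribution on ℒ, and let P_Z(z) = ∑_ℓ P(ℓ) W(z|ℓ). Then for every ρ with 0 < ρ < 1, ∑_{(z,ℓ) : P_Z(z) > 0} P(ℓ) W(z|ℓ)^{1+ρ} P_Z(z)^{−ρ} ≤ ∑_z ( ∑_ℓ P(ℓ) W(z|ℓ)^{1/(1−ρ)} )^{1−ρ}; equivalently, exp(ψ(ρ, W, P)) ≤ exp(φ(ρ, W, P)). -/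
open Finset Real

/-! For each output `z` with `P_Z(z) > 0`, apply the weighted Hölder inequality with exponent
`p = 1/(1-ρ)` to `W(z|·)^ρ` and the weights `P(ℓ) W(z|ℓ)`, whose total mass is `P_Z(z)`. This gives
`∑_ℓ P(ℓ) W(z|ℓ)^{1+ρ} ≤ P_Z(z)^ρ (∑_ℓ P(ℓ) W(z|ℓ)^{1/(1-ρ)})^{1-ρ}`, and summing over `z`
(the missing terms on the right are nonnegative) gives the claim. -/

section
variable {ι : Type*} (s : Finset ι) {w x : ι → ℝ} {ρ : ℝ}

theorem sum_mul_rpow_one_add_le (hw : ∀ i, 0 ≤ w i) (hx : ∀ i, 0 ≤ x i)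
    (hρ0 : 0 ≤ ρ) (hρ1 : ρ < 1) :
    ∑ i ∈ s, w i * x i ^ (1 + ρ) ≤
      (∑ i ∈ s, w i * x i) ^ ρ * (∑ i ∈ s, w i * x i ^ (1 / (1 - ρ))) ^ (1 - ρ) := by
  have h1ρ : 0 < 1 - ρ := by linarith
  have hp : 1 ≤ 1 / (1 - ρ) := by rw [le_div_iff₀ h1ρ]; linarith
  have hexp : 1 + ρ * (1 / (1 - ρ)) = 1 / (1 - ρ) := by field_simp; ring
  have hholder := inner_le_weight_mul_Lp_of_nonneg s hp (fun i ↦ w i * x i) (fun i ↦ x i ^ ρ)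
    (fun i ↦ mul_nonneg (hw i) (hx i)) (fun i ↦ rpow_nonneg (hx i) ρ)
  have hleft (i : ι) : w i * x i * x i ^ ρ = w i * x i ^ (1 + ρ) := by
    rw [rpow_one_add' (hx i) (by linarith), mul_assoc]
  have hright (i : ι) : w i * x i * (x i ^ ρ) ^ (1 / (1 - ρ)) = w i * x i ^ (1 / (1 - ρ)) := by
    rw [← rpow_mul (hx i), mul_assoc, ← rpow_one_add' (hx i) (by rw [hexp]; positivity), hexp]
  simpa only [hleft, hright, inv_div, div_one, sub_sub_cancel] using hholder

theorem sum_mul_rpow_one_add_mul_rpow_neg_le (hw : ∀ i, 0 ≤ w i) (hx : ∀ i, 0 ≤ x i)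
    (hρ0 : 0 ≤ ρ) (hρ1 : ρ < 1) (hpos : 0 < ∑ i ∈ s, w i * x i) :
    ∑ i ∈ s, w i * x i ^ (1 + ρ) * (∑ j ∈ s, w j * x j) ^ (-ρ) ≤
      (∑ i ∈ s, w i * x i ^ (1 / (1 - ρ))) ^ (1 - ρ) := by
  rw [← sum_mul, rpow_neg hpos.le, ← div_eq_mul_inv, div_le_iff₀ (rpow_pos_of_pos hpos ρ),
    mul_comm]
  exact sum_mul_rpow_one_add_le s hw hx hρ0 hρ1

end

theorem psi_le_phi_general
    {L Z : Type*} [Fintype L] [Fintype Z]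
    (W : L → Z → ℝ) (hWnn : ∀ ℓ z, 0 ≤ W ℓ z)
    (P : L → ℝ) (hPnn : ∀ ℓ, 0 ≤ P ℓ)
    (PZ : Z → ℝ) (hPZ : ∀ z, PZ z = ∑ ℓ, P ℓ * W ℓ z)
    (ρ : ℝ) (hρ0 : 0 < ρ) (hρ1 : ρ < 1) :
    ∑ p ∈ univ.filter (fun p : Z × L => 0 < PZ p.1),
        P p.2 * W p.2 p.1 ^ (1 + ρ) * PZ p.1 ^ (-ρ) ≤
      ∑ z, (∑ ℓ, P ℓ * W ℓ z ^ (1 / (1 - ρ))) ^ (1 - ρ) := by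
  have hsupport : univ.filter (fun p : Z × L => 0 < PZ p.1) =
      univ.filter (fun z => 0 < PZ z) ×ˢ univ := by
    ext p; simp
  rw [hsupport, sum_product]
  calc _ ≤ ∑ z ∈ univ.filter (fun z => 0 < PZ z),
          (∑ ℓ, P ℓ * W ℓ z ^ (1 / (1 - ρ))) ^ (1 - ρ) := by
        refine sum_le_sum fun z hz ↦ ?_
        have hpos : 0 < PZ z := (mem_filter.1 hz).2
        dsimp only
        rw [hPZ z] at hpos ⊢
        exact sum_mul_rpow_one_add_mul_rpow_neg_le univ hPnn (fun ℓ ↦ hWnn ℓ z) hρ0.le hρ1 hpos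
    _ ≤ _ := sum_le_sum_of_subset_of_nonneg (filter_subset _ _) fun z _ _ ↦
        rpow_nonneg (sum_nonneg fun ℓ _ ↦ mul_nonneg (hPnn ℓ) (rpow_nonneg (hWnn ℓ z) _)) _

/-- `exp(ψ(ρ, W, P)) ≤ exp(φ(ρ, W, P))`:
`∑_{(z,ℓ) : P_Z z > 0} P(ℓ) W(z|ℓ)^{1+ρ} P_Z(z)^{-ρ}
  ≤ ∑_z (∑_ℓ P(ℓ) W(z|ℓ)^{1/(1-ρ)})^{1-ρ}` for `0 < ρ < 1`. -/
theorem psi_le_phi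
    {L Z : Type*} [Fintype L] [Fintype Z] [Nonempty L] [Nonempty Z]
    (W : L → Z → ℝ) (hWnn : ∀ ℓ z, 0 ≤ W ℓ z) (hWsum : ∀ ℓ, ∑ z, W ℓ z = 1)
    (P : L → ℝ) (hPnn : ∀ ℓ, 0 ≤ P ℓ) (hPsum : ∑ ℓ, P ℓ = 1)
    (PZ : Z → ℝ) (hPZ : ∀ z, PZ z = ∑ ℓ, P ℓ * W ℓ z)
    (ρ : ℝ) (hρ0 : 0 < ρ) (hρ1 : ρ < 1) :
    ∑ p ∈ univ.filter (fun p : Z × L => 0 < PZ p.1),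
        P p.2 * W p.2 p.1 ^ (1 + ρ) * PZ p.1 ^ (-ρ) ≤
      ∑ z, (∑ ℓ, P ℓ * W ℓ z ^ (1 / (1 - ρ))) ^ (1 - ρ) :=
  psi_le_phi_general W hWnn P hPnn PZ hPZ ρ hρ0 hρ1
end

section
/- Let 𝒜 be a nonempty finite set and let Δ denote the set of probability distributions on 𝒜 (viewed as a subset of ℝ^𝒜). Let f : ℝ^𝒜 → ℝ be a function that is concave on Δ and nonnegative on Δ. If P, Q ∈ Δ, α ≥ 1 is a real number, and P(a) ≤ α · Q(a) for all a ∈ 𝒜, then f(P) ≤ α · f(Q). -/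
/-!
If `P ≤ α Q` with `α > 1`, then `R = (α Q - P) / (α - 1)` is again a probability distribution and
`Q = α⁻¹ P + (1 - α⁻¹) R`. Concavity and `f R ≥ 0` give `f Q ≥ α⁻¹ f P`.
For `α = 1` domination forces `P = Q`.
-/

open Finset

theorem ConcaveOn.smul_le_of_nonneg_right {𝕜 E β : Type*} [Semiring 𝕜] [PartialOrder 𝕜]
    [AddCommMonoid E] [AddCommMonoid β] [PartialOrder β] [IsOrderedAddMonoid β] [SMul 𝕜 E]
    [Module 𝕜 β] [PosSMulMono 𝕜 β] {s : Set E} {f : E → β} (hf : ConcaveOn 𝕜 s f)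
    {x y : E} (hx : x ∈ s) (hy : y ∈ s) (hfy : 0 ≤ f y) {a b : 𝕜} (ha : 0 ≤ a) (hb : 0 ≤ b)
    (hab : a + b = 1) : a • f x ≤ f (a • x + b • y) :=
  (le_add_of_nonneg_right (smul_nonneg hb hfy)).trans (hf.2 hx hy ha hb hab)

theorem eq_of_le_of_mem_stdSimplex {𝕜 ι : Type*} [Fintype ι] [Semiring 𝕜] [PartialOrder 𝕜]
    [IsOrderedCancelAddMonoid 𝕜] {P Q : ι → 𝕜} (hP : P ∈ stdSimplex 𝕜 ι)
    (hQ : Q ∈ stdSimplex 𝕜 ι) (hPQ : P ≤ Q) : P = Q :=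
  funext fun a ↦
    (sum_eq_sum_iff_of_le fun a _ ↦ hPQ a).1 (hP.2.trans hQ.2.symm) a (mem_univ a)

theorem exists_mem_stdSimplex_eq_inv_smul_add {𝕜 ι : Type*} [Fintype ι] [Field 𝕜]
    [LinearOrder 𝕜] [IsStrictOrderedRing 𝕜] {P Q : ι → 𝕜} (hP : P ∈ stdSimplex 𝕜 ι)
    (hQ : Q ∈ stdSimplex 𝕜 ι) {α : 𝕜} (hα : 1 ≤ α) (hPQ : ∀ a, P a ≤ α * Q a) :
    ∃ R ∈ stdSimplex 𝕜 ι, Q = α⁻¹ • P + (1 - α⁻¹) • R := by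
  rcases hα.eq_or_lt with rfl | hα
  · refine ⟨Q, hQ, ?_⟩
    rw [eq_of_le_of_mem_stdSimplex hP hQ fun a ↦ by simpa using hPQ a]
    simp
  have hα1 : 0 < α - 1 := sub_pos.2 hα
  refine ⟨(α - 1)⁻¹ • (α • Q - P), ⟨fun a ↦ ?_, ?_⟩, ?_⟩
  · simpa using mul_nonneg (inv_nonneg.2 hα1.le) (sub_nonneg.2 (hPQ a))
  · simp only [Pi.smul_apply, Pi.sub_apply, smul_eq_mul, ← mul_sum, sum_sub_distrib, hP.2, hQ.2]
    field_simp
  · ext a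
    simp only [Pi.add_apply, Pi.smul_apply, Pi.sub_apply, smul_eq_mul]
    field_simp
    ring

theorem concave_nonneg_dominated_general
    {A : Type*} [Fintype A]
    (f : (A → ℝ) → ℝ)
    (hconc : ConcaveOn ℝ (stdSimplex ℝ A) f)
    (hnn : ∀ P ∈ stdSimplex ℝ A, 0 ≤ f P)
    (P Q : A → ℝ) (hP : P ∈ stdSimplex ℝ A) (hQ : Q ∈ stdSimplex ℝ A)
    (α : ℝ) (hα : 1 ≤ α) (hPQ : ∀ a, P a ≤ α * Q a) :
    f P ≤ α * f Q := by
  obtain ⟨R, hR, rfl⟩ := exists_mem_stdSimplex_eq_inv_smul_add hP hQ hα hPQ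
  have hα0 : 0 < α := zero_lt_one.trans_le hα
  calc f P = α * (α⁻¹ * f P) := by field_simp
    _ ≤ α * f (α⁻¹ • P + (1 - α⁻¹) • R) := by
      gcongr
      exact hconc.smul_le_of_nonneg_right hP hR (hnn R hR) (by positivity)
        (sub_nonneg.2 (inv_le_one_of_one_le₀ hα)) (add_sub_cancel _ _)

/-- A nonnegative concave function `f` on the probability simplex satisfies
`f(P) ≤ α · f(Q)` whenever `P ≤ α · Q` pointwise with `α ≥ 1`. -/
theorem concave_nonneg_dominated
    {A : Type*} [Fintype A] [Nonempty A]
    (f : (A → ℝ) → ℝ)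
    (hconc : ConcaveOn ℝ (stdSimplex ℝ A) f)
    (hnn : ∀ P ∈ stdSimplex ℝ A, 0 ≤ f P)
    (P Q : A → ℝ) (hP : P ∈ stdSimplex ℝ A) (hQ : Q ∈ stdSimplex ℝ A)
    (α : ℝ) (hα : 1 ≤ α) (hPQ : ∀ a, P a ≤ α * Q a) :
    f P ≤ α * f Q :=
  concave_nonneg_dominated_general f hconc hnn P Q hP hQ α hα hPQ
end

section
/- Let ℒ and 𝒵 be nonempty finite sets, let W be a channel from ℒ to 𝒵, and fix ρ with 0 < ρ < 1. Then the function G : ℝ^ℒ → ℝ defined on the set Δ of probability distributions on ℒ by G(P) = ∑_z ( ∑_ℓ P(ℓ) W(z|ℓ)^{1/(1−ρ)} )^{1−ρ} (i.e. G(P) = exp(φ(ρ, W, P))) is concave on Δ. -/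
/-!
For `0 < ρ < 1` each summand is the concave power `t ↦ t ^ (1 - ρ)` applied to a
linear, nonnegative function of `P`, hence concave; a finite sum of concave functions is concave.
-/

open Finset

theorem ConcaveOn.fun_sum {𝕜 E β ι : Type*} [Semiring 𝕜] [PartialOrder 𝕜] [AddCommMonoid E]
    [AddCommMonoid β] [PartialOrder β] [IsOrderedAddMonoid β] [Module 𝕜 E] [Module 𝕜 β]
    {s : Set E} (hs : Convex 𝕜 s) {f : ι → E → β} (t : Finset ι)
    (hf : ∀ i ∈ t, ConcaveOn 𝕜 s (f i)) :
    ConcaveOn 𝕜 s (fun x ↦ ∑ i ∈ t, f i x) := by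
  classical
  induction t using Finset.induction with
  | empty => simpa using concaveOn_const 0 hs
  | insert i t hi ih =>
    simp only [Finset.sum_insert hi]
    exact (hf i (mem_insert_self i t)).add (ih fun j hj ↦ hf j (mem_insert_of_mem hj))

theorem concaveOn_rpow_sum_mul {L : Type*} [Fintype L] (c : L → ℝ) (hc : ∀ ℓ, 0 ≤ c ℓ)
    {p : ℝ} (hp₀ : 0 ≤ p) (hp₁ : p ≤ 1) :
    ConcaveOn ℝ (Set.Ici 0) (fun P : L → ℝ ↦ (∑ ℓ, P ℓ * c ℓ) ^ p) := by
  have hsub : Set.Ici (0 : L → ℝ) ⊆ Fintype.linearCombination ℝ c ⁻¹' Set.Ici 0 := fun P hP ↦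
    Finset.sum_nonneg fun ℓ _ ↦ smul_nonneg (hP ℓ) (hc ℓ)
  have hcomp : (fun P : L → ℝ ↦ (∑ ℓ, P ℓ * c ℓ) ^ p) =
      (fun x ↦ x ^ p) ∘ Fintype.linearCombination ℝ c := by
    ext P
    simp [Fintype.linearCombination_apply]
  rw [hcomp]
  exact ((Real.concaveOn_rpow hp₀ hp₁).comp_linearMap _).subset hsub (convex_Ici 0)

theorem exp_phi_concaveOn_general
    {L Z : Type*} [Fintype L] [Fintype Z]
    (W : L → Z → ℝ) (hWnn : ∀ ℓ z, 0 ≤ W ℓ z)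
    (ρ : ℝ) (hρ0 : 0 < ρ) (hρ1 : ρ < 1) :
    ConcaveOn ℝ (stdSimplex ℝ L)
      (fun P : L → ℝ => ∑ z, (∑ ℓ, P ℓ * W ℓ z ^ (1 / (1 - ρ))) ^ (1 - ρ)) := by
  refine ConcaveOn.fun_sum (convex_stdSimplex ℝ L) univ fun z _ ↦ ?_
  have hWpow : ∀ ℓ, 0 ≤ W ℓ z ^ (1 / (1 - ρ)) := fun ℓ ↦ Real.rpow_nonneg (hWnn ℓ z) _
  exact (concaveOn_rpow_sum_mul _ hWpow (by linarith) (by linarith)).subset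
    (fun P hP ↦ hP.1) (convex_stdSimplex ℝ L)

/-- Gallager's function `G(P) = exp(φ(ρ, W, P)) = ∑_z (∑_ℓ P(ℓ) W(z|ℓ)^{1/(1-ρ)})^{1-ρ}`
is concave in the input distribution `P` on the probability simplex, for `0 < ρ < 1`. -/
theorem exp_phi_concaveOn
    {L Z : Type*} [Fintype L] [Fintype Z] [Nonempty L] [Nonempty Z]
    (W : L → Z → ℝ) (hWnn : ∀ ℓ z, 0 ≤ W ℓ z) (hWsum : ∀ ℓ, ∑ z, W ℓ z = 1)
    (ρ : ℝ) (hρ0 : 0 < ρ) (hρ1 : ρ < 1) :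
    ConcaveOn ℝ (stdSimplex ℝ L)
      (fun P : L → ℝ => ∑ z, (∑ ℓ, P ℓ * W ℓ z ^ (1 / (1 - ρ))) ^ (1 - ρ)) :=
  exp_phi_concaveOn_general W hWnn ρ hρ0 hρ1
end

section
/- Let 𝒰, 𝒱, 𝒵 be nonempty finite sets, P_U a probability distribution on 𝒰, P_{V|U} a channel from 𝒰 to 𝒱, and W a channel from 𝒱 to 𝒵. Then the averaged Gallager function satisfies lim_{ρ → 0⁺} φ(ρ, W, P_{V|U}, P_U) / ρ = I(V;Z|U), where I(V;Z|U) = ∑_u P_U(u) ∑_{(v,z) : P_{V|U}(v|u) W(z|v) > 0} P_{V|U}(v|u) W(z|v) log( W(z|v) / (∑_{v'} P_{V|U}(v'|u) W(z|v')) ) is the conditional mutual information of the triple (U, V, Z) with joint distribution P_U(u) P_{V|U}(v|u) W(z|v). -/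
/-!
At `ρ = 0` the argument of the logarithm in `φ` equals `1`, so `φ(0) = 0` and the limit is
`φ'(0)`. Each inner term is a power mean `(∑_v p_v w_v ^ (1/(1-ρ))) ^ (1-ρ)`, whose derivative
at `ρ = 0` is `∑_v p_v w_v log w_v - Q log Q` with `Q = ∑_v p_v w_v`; averaging these over
`z` and `u` gives exactly `I(V;Z|U)`.
-/

open Finset

/-- The averaged Gallager function
`φ(ρ, W, P_{V|U}, P_U) = log ∑_u P_U(u) ∑_z (∑_v P_{V|U}(v|u) W(z|v)^{1/(1-ρ)})^{1-ρ}`. -/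
noncomputable def avgPhi {U V Z : Type*} [Fintype U] [Fintype V] [Fintype Z]
    (ρ : ℝ) (W : V → Z → ℝ) (PVU : U → V → ℝ) (PU : U → ℝ) : ℝ :=
  Real.log (∑ u, PU u * ∑ z, (∑ v, PVU u v * W v z ^ (1 / (1 - ρ))) ^ (1 - ρ))

open Filter Topology

lemma tendsto_div_nhdsGT_of_hasDerivAt {f : ℝ → ℝ} {f' : ℝ} (hf : HasDerivAt f f' 0)
    (h0 : f 0 = 0) : Tendsto (fun x => f x / x) (𝓝[>] 0) (𝓝 f') := by
  refine ((hasDerivAt_iff_tendsto_slope_zero.mp hf).mono_left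
    (nhdsWithin_mono 0 fun x hx => ne_of_gt hx)).congr fun x => ?_
  simp [h0, div_eq_inv_mul]

lemma hasDerivAt_one_div_one_sub : HasDerivAt (fun ρ : ℝ => 1 / (1 - ρ)) 1 0 := by
  simpa [one_div] using ((hasDerivAt_id (0 : ℝ)).const_sub 1).fun_inv (by norm_num)

lemma eventually_one_div_one_sub_ne_zero : ∀ᶠ ρ : ℝ in 𝓝 0, 1 / (1 - ρ) ≠ 0 ∧ 1 - ρ ≠ 0 := by
  filter_upwards [isOpen_compl_singleton.mem_nhds (by norm_num : (0 : ℝ) ≠ 1)] with ρ hρ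
  have : 1 - ρ ≠ 0 := sub_ne_zero.mpr (Ne.symm hρ)
  exact ⟨one_div_ne_zero this, this⟩

lemma hasDerivAt_rpow_one_div_one_sub {c : ℝ} (hc : 0 ≤ c) :
    HasDerivAt (fun ρ : ℝ => c ^ (1 / (1 - ρ))) (c * Real.log c) 0 := by
  rcases hc.lt_or_eq with hc | rfl
  · simpa [mul_comm] using hasDerivAt_one_div_one_sub.const_rpow hc
  · refine (hasDerivAt_const (0 : ℝ) (0 : ℝ)).congr_of_eventuallyEq ?_ |>.congr_deriv (by simp)
    filter_upwards [eventually_one_div_one_sub_ne_zero] with ρ hρ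
    exact Real.zero_rpow hρ.1

lemma HasDerivAt.rpow_one_sub {S : ℝ → ℝ} {S' : ℝ} (hS : HasDerivAt S S' 0) (h0 : 0 < S 0) :
    HasDerivAt (fun ρ => S ρ ^ (1 - ρ)) (S' - S 0 * Real.log (S 0)) 0 := by
  have := hS.rpow ((hasDerivAt_id (0 : ℝ)).const_sub 1) h0
  simpa [sub_eq_add_neg] using this

lemma hasDerivAt_sum_mul_rpow_rpow {ι : Type*} (s : Finset ι) {p w : ι → ℝ}
    (hp : ∀ i ∈ s, 0 ≤ p i) (hw : ∀ i ∈ s, 0 ≤ w i) :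
    HasDerivAt (fun ρ : ℝ => (∑ i ∈ s, p i * w i ^ (1 / (1 - ρ))) ^ (1 - ρ))
      (∑ i ∈ s, p i * (w i * Real.log (w i)) -
        (∑ i ∈ s, p i * w i) * Real.log (∑ i ∈ s, p i * w i)) 0 := by
  have hS : HasDerivAt (fun ρ : ℝ => ∑ i ∈ s, p i * w i ^ (1 / (1 - ρ)))
      (∑ i ∈ s, p i * (w i * Real.log (w i))) 0 :=
    HasDerivAt.fun_sum fun i hi => (hasDerivAt_rpow_one_div_one_sub (hw i hi)).const_mul (p i)
  have hQ : 0 ≤ ∑ i ∈ s, p i * w i := sum_nonneg fun i hi => mul_nonneg (hp i hi) (hw i hi)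
  rcases hQ.lt_or_eq with hQ | hQ
  · simpa using hS.rpow_one_sub (by simpa using hQ)
  -- all `p i * w i` vanish, hence so do the terms `p i * w i ^ t` for `t ≠ 0`
  have hpw : ∀ i ∈ s, p i = 0 ∨ w i = 0 := fun i hi => mul_eq_zero.mp
    ((sum_eq_zero_iff_of_nonneg fun i hi => mul_nonneg (hp i hi) (hw i hi)).mp hQ.symm i hi)
  have hA : ∑ i ∈ s, p i * (w i * Real.log (w i)) = 0 :=
    sum_eq_zero fun i hi => by rcases hpw i hi with h | h <;> simp [h]
  rw [← hQ, hA]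
  refine (hasDerivAt_const (0 : ℝ) (0 : ℝ)).congr_of_eventuallyEq ?_ |>.congr_deriv (by simp)
  filter_upwards [eventually_one_div_one_sub_ne_zero] with ρ hρ
  have : ∑ i ∈ s, p i * w i ^ (1 / (1 - ρ)) = 0 :=
    sum_eq_zero fun i hi => by
      rcases hpw i hi with h | h
      · rw [h, zero_mul]
      · rw [h, Real.zero_rpow hρ.1, mul_zero]
  rw [this, Real.zero_rpow hρ.2]

lemma mul_mul_log_div_eq {p w q : ℝ} (hp : 0 ≤ p) (hw : 0 ≤ w) (hq : p * w ≤ q) :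
    p * w * Real.log (w / q) = p * (w * Real.log w) - p * w * Real.log q := by
  rcases (mul_nonneg hp hw).lt_or_eq with hpw | hpw
  · have hw' : 0 < w := pos_of_mul_pos_right hpw hp
    rw [Real.log_div hw'.ne' (hpw.trans_le hq).ne']
    ring
  · rcases mul_eq_zero.mp hpw.symm with h | h <;> simp [h]

lemma sum_filter_mul_log_div_sum_eq {V Z : Type*} [Fintype V] [Fintype Z]
    {p : V → ℝ} {w : V → Z → ℝ} (hp : ∀ v, 0 ≤ p v) (hw : ∀ v z, 0 ≤ w v z) :
    ∑ x ∈ univ.filter (fun x : V × Z => 0 < p x.1 * w x.1 x.2),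
        p x.1 * w x.1 x.2 * Real.log (w x.1 x.2 / ∑ v', p v' * w v' x.2) =
      ∑ z, (∑ v, p v * (w v z * Real.log (w v z)) -
        (∑ v, p v * w v z) * Real.log (∑ v, p v * w v z)) := by
  rw [sum_filter_of_ne fun x _ hx => lt_of_le_of_ne (mul_nonneg (hp _) (hw _ _))
    fun h => hx (by rw [← h, zero_mul]), Fintype.sum_prod_type, sum_comm]
  refine sum_congr rfl fun z _ => ?_
  rw [sum_mul, ← sum_sub_distrib]
  exact sum_congr rfl fun v _ => mul_mul_log_div_eq (hp v) (hw v z)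
    (single_le_sum (f := fun v => p v * w v z) (fun v _ => mul_nonneg (hp v) (hw v z)) (mem_univ v))

section Gallager

variable {U V Z : Type*} [Fintype U] [Fintype V] [Fintype Z]

noncomputable def gallagerSum (ρ : ℝ) (W : V → Z → ℝ) (PVU : U → V → ℝ) (PU : U → ℝ) : ℝ :=
  ∑ u, PU u * ∑ z, (∑ v, PVU u v * W v z ^ (1 / (1 - ρ))) ^ (1 - ρ)

lemma avgPhi_eq_log_gallagerSum (ρ : ℝ) (W : V → Z → ℝ) (PVU : U → V → ℝ) (PU : U → ℝ) :
    avgPhi ρ W PVU PU = Real.log (gallagerSum ρ W PVU PU) := rfl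

lemma gallagerSum_zero {W : V → Z → ℝ} {PVU : U → V → ℝ} {PU : U → ℝ}
    (hPU : ∑ u, PU u = 1) (hPVU : ∀ u, ∑ v, PVU u v = 1) (hW : ∀ v, ∑ z, W v z = 1) :
    gallagerSum 0 W PVU PU = 1 := by
  simp only [gallagerSum, sub_zero, div_one, Real.rpow_one, sum_comm (γ := Z), ← mul_sum, hW,
    mul_one, hPVU, hPU]

lemma hasDerivAt_gallagerSum {W : V → Z → ℝ} {PVU : U → V → ℝ} (PU : U → ℝ)
    (hPVU : ∀ u v, 0 ≤ PVU u v) (hW : ∀ v z, 0 ≤ W v z) :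
    HasDerivAt (gallagerSum · W PVU PU)
      (∑ u, PU u * ∑ z, (∑ v, PVU u v * (W v z * Real.log (W v z)) -
        (∑ v, PVU u v * W v z) * Real.log (∑ v, PVU u v * W v z))) 0 :=
  HasDerivAt.fun_sum fun u _ => .const_mul (PU u) <| HasDerivAt.fun_sum fun z _ =>
    hasDerivAt_sum_mul_rpow_rpow univ (fun v _ => hPVU u v) (fun v _ => hW v z)

end Gallager

theorem avgPhi_div_rho_tendsto_condMutInfo_general
    {U V Z : Type*} [Fintype U] [Fintype V] [Fintype Z]
    (PU : U → ℝ) (hPUsum : ∑ u, PU u = 1)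
    (PVU : U → V → ℝ) (hPVUnn : ∀ u v, 0 ≤ PVU u v) (hPVUsum : ∀ u, ∑ v, PVU u v = 1)
    (W : V → Z → ℝ) (hWnn : ∀ v z, 0 ≤ W v z) (hWsum : ∀ v, ∑ z, W v z = 1) :
    Filter.Tendsto (fun ρ : ℝ => avgPhi ρ W PVU PU / ρ)
      (nhdsWithin 0 (Set.Ioi 0))
      (nhds (∑ u, PU u *
        ∑ p ∈ univ.filter (fun p : V × Z => 0 < PVU u p.1 * W p.1 p.2),
          PVU u p.1 * W p.1 p.2 *
            Real.log (W p.1 p.2 / ∑ v', PVU u v' * W v' p.2))) := by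
  have hF0 := gallagerSum_zero hPUsum hPVUsum hWsum
  have hφ := (hasDerivAt_gallagerSum PU hPVUnn hWnn).log (by simp [hF0])
  simp only [hF0, div_one, ← avgPhi_eq_log_gallagerSum] at hφ
  simp only [sum_filter_mul_log_div_sum_eq (hPVUnn _) hWnn]
  exact tendsto_div_nhdsGT_of_hasDerivAt hφ (by simp [avgPhi_eq_log_gallagerSum, hF0])

/-- As `ρ → 0⁺`, `φ(ρ, W, P_{V|U}, P_U) / ρ` tends to the conditional mutual
information `I(V;Z|U)` of the triple `(U, V, Z)` with joint distribution
`P_U(u) P_{V|U}(v|u) W(z|v)`. -/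
theorem avgPhi_div_rho_tendsto_condMutInfo
    {U V Z : Type*} [Fintype U] [Fintype V] [Fintype Z]
    [Nonempty U] [Nonempty V] [Nonempty Z]
    (PU : U → ℝ) (hPUnn : ∀ u, 0 ≤ PU u) (hPUsum : ∑ u, PU u = 1)
    (PVU : U → V → ℝ) (hPVUnn : ∀ u v, 0 ≤ PVU u v) (hPVUsum : ∀ u, ∑ v, PVU u v = 1)
    (W : V → Z → ℝ) (hWnn : ∀ v z, 0 ≤ W v z) (hWsum : ∀ v, ∑ z, W v z = 1) :
    Filter.Tendsto (fun ρ : ℝ => avgPhi ρ W PVU PU / ρ)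
      (nhdsWithin 0 (Set.Ioi 0))
      (nhds (∑ u, PU u *
        ∑ p ∈ univ.filter (fun p : V × Z => 0 < PVU u p.1 * W p.1 p.2),
          PVU u p.1 * W p.1 p.2 *
            Real.log (W p.1 p.2 / ∑ v', PVU u v' * W v' p.2))) :=
  avgPhi_div_rho_tendsto_condMutInfo_general PU hPUsum PVU hPVUnn hPVUsum W hWnn hWsum
end

section
/- Let 𝔽 be a finite field, and let m ≥ k ≥ 1 be natural numbers. Let 𝓕 be the (nonempty) set of all surjective 𝔽-linear maps from 𝔽^m to 𝔽^k, equipped with the uniform distribution. Then 𝓕 is a two-universal family of hash functions from 𝔽^m to 𝔽^k: for all x₁ ≠ x₂ in 𝔽^m, the number of surjective linear maps f with f(x₁) = f(x₂), divided by the total number of surjective linear maps from 𝔽^m to 𝔽^k, is at most 1/|𝔽|^k. -/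
/-!
Put `v := x₁ - x₂ ≠ 0` and choose a functional `φ` with `φ v = 1`. For a surjection `f` with
`f v = 0` and any `w`, the map `f + φ ⊗ w` is again surjective and sends `v` to `w`, so the pair
`(w, f)` can be read off from it. This injects `𝔽^k × {colliding surjections}` into the
surjections, i.e. `|𝔽|^k · #colliding ≤ #surjections`.
-/

open Function

section Collisions

variable {K V W : Type*} [Field K] [AddCommGroup V] [Module K V] [AddCommGroup W] [Module K W]

theorem LinearMap.surjective_add_smulRight {f : V →ₗ[K] W} (hf : Surjective f) {v : V}
    (hfv : f v = 0) {φ : Module.Dual K V} (hφv : φ v = 1) (w : W) :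
    Surjective (f + φ.smulRight w) := by
  intro y
  obtain ⟨x, rfl⟩ := hf y
  refine ⟨x - φ x • v, ?_⟩
  simp [hfv, hφv]

theorem card_mul_card_surjective_apply_eq_le [Finite V] [Finite W] {x₁ x₂ : V} (hx : x₁ ≠ x₂) :
    Nat.card W * Nat.card {f : V →ₗ[K] W // Surjective f ∧ f x₁ = f x₂} ≤
      Nat.card {f : V →ₗ[K] W // Surjective f} := by
  have : Finite (V →ₗ[K] W) := Finite.of_injective _ DFunLike.coe_injective
  obtain ⟨φ, hφ⟩ := Module.Projective.exists_dual_eq_one K (sub_ne_zero.mpr hx)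
  have hker {f : V →ₗ[K] W} (h : f x₁ = f x₂) : f (x₁ - x₂) = 0 := by
    rw [map_sub, h, sub_self]
  let extend (p : W × {f : V →ₗ[K] W // Surjective f ∧ f x₁ = f x₂}) :
      {f : V →ₗ[K] W // Surjective f} :=
    ⟨p.2.1 + φ.smulRight p.1, p.2.1.surjective_add_smulRight p.2.2.1 (hker p.2.2.2) hφ p.1⟩
  have extend_injective : Injective extend := by
    rintro ⟨w₁, f₁, hf₁⟩ ⟨w₂, f₂, hf₂⟩ h
    have hsum : f₁ + φ.smulRight w₁ = f₂ + φ.smulRight w₂ := congrArg Subtype.val h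
    have hw : w₁ = w₂ := by
      simpa [hker hf₁.2, hker hf₂.2, hφ] using LinearMap.congr_fun hsum (x₁ - x₂)
    subst hw
    simp [add_right_cancel hsum]
  simpa [Nat.card_prod] using Nat.card_le_card_of_injective extend extend_injective

end Collisions

theorem surjective_linear_maps_two_universal_general
    (𝔽 : Type*) [Field 𝔽] [Fintype 𝔽]
    (m k : ℕ)
    (x₁ x₂ : Fin m → 𝔽) (hx : x₁ ≠ x₂) :
    (Nat.card {f : (Fin m → 𝔽) →ₗ[𝔽] (Fin k → 𝔽) //
        Function.Surjective f ∧ f x₁ = f x₂} : ℝ) /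
      (Nat.card {f : (Fin m → 𝔽) →ₗ[𝔽] (Fin k → 𝔽) // Function.Surjective f} : ℝ) ≤
      1 / ((Fintype.card 𝔽 : ℝ) ^ k) := by
  have hcount := card_mul_card_surjective_apply_eq_le (K := 𝔽) (W := Fin k → 𝔽) hx
  rw [Nat.card_fun, Nat.card_fin, Nat.card_eq_fintype_card] at hcount
  have hq : (0 : ℝ) < (Fintype.card 𝔽 : ℝ) ^ k := by positivity
  refine div_le_of_le_mul₀ (Nat.cast_nonneg _) (by positivity) ?_
  rw [div_mul_eq_mul_div, one_mul, le_div_iff₀ hq, mul_comm]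
  exact_mod_cast hcount

/-- The set of all surjective `𝔽`-linear maps from `𝔽^m` to `𝔽^k` (with `m ≥ k ≥ 1`),
equipped with the uniform distribution, is a two-universal family of hash functions:
for `x₁ ≠ x₂`, the fraction of surjective linear maps `f` with `f x₁ = f x₂` is at
most `1 / |𝔽|^k`. -/
theorem surjective_linear_maps_two_universal
    (𝔽 : Type*) [Field 𝔽] [Fintype 𝔽]
    (m k : ℕ) (hk : 1 ≤ k) (hkm : k ≤ m)
    (x₁ x₂ : Fin m → 𝔽) (hx : x₁ ≠ x₂) :
    (Nat.card {f : (Fin m → 𝔽) →ₗ[𝔽] (Fin k → 𝔽) //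
        Function.Surjective f ∧ f x₁ = f x₂} : ℝ) /
      (Nat.card {f : (Fin m → 𝔽) →ₗ[𝔽] (Fin k → 𝔽) // Function.Surjective f} : ℝ) ≤
      1 / ((Fintype.card 𝔽 : ℝ) ^ k) :=
  surjective_linear_maps_two_universal_general 𝔽 m k x₁ x₂ hx
end

section
/- Let 𝒰, 𝒱, 𝒵 be nonempty finite sets and W a channel from 𝒱 to 𝒵. Let P_U, Q_U be probability distributions on 𝒰 and P_{V|U}, Q_{V|U} channels from 𝒰 to 𝒱. Suppose there are positive reals C₁, C₂ such that P_{V|U}(v|u) ≤ C₁ · Q_{V|U}(v|u) for all u with P_U(u) > 0 and all v, and P_U(u) ≤ C₂ · Q_U(u) for all u. Then for every ρ with 0 < ρ < 1, exp(φ(ρ, W, P_{V|U}, P_U)) ≤ C₁ · C₂ · exp(φ(ρ, W, Q_{V|U}, Q_U)). -/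
open Finset

/-!
The Gallager function is a `P_U`-average of the per-input terms
`E(u) = ∑_z (∑_v P_{V|U}(v|u) W(z|v)^α)^β` with `β = 1 - ρ ∈ (0, 1]`. On the support of `P_U`
the bound `P_{V|U} ≤ C₁ Q_{V|U}` passes through the inner sum and then through the concave power
`x ↦ x^β`, giving `E_P(u) ≤ C₁^β E_Q(u) ≤ C₁ E_Q(u)`; here `C₁ ≥ 1` because both channels are
stochastic. Averaging against `P_U ≤ C₂ Q_U` gives the factor `C₂`.
-/

lemma exists_pos_of_sum_eq_one {ι : Type*} [Fintype ι] {p : ι → ℝ} (hp : ∑ i, p i = 1) :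
    ∃ i, 0 < p i := by
  obtain ⟨i, -, hi⟩ := exists_lt_of_sum_lt (s := univ) (f := 0) (g := p) (by simp [hp])
  exact ⟨i, hi⟩

lemma one_le_of_le_mul_of_sum_eq_one {ι : Type*} [Fintype ι] {p q : ι → ℝ} {C : ℝ}
    (hp : ∑ i, p i = 1) (hq : ∑ i, q i = 1) (hpq : ∀ i, p i ≤ C * q i) : 1 ≤ C :=
  calc 1 = ∑ i, p i := hp.symm
    _ ≤ ∑ i, C * q i := sum_le_sum fun i _ => hpq i
    _ = C := by rw [← mul_sum, hq, mul_one]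

lemma Real.rpow_le_mul_rpow_of_le_mul {a b C β : ℝ} (ha : 0 ≤ a) (hab : a ≤ C * b)
    (hC : 1 ≤ C) (hβ0 : 0 ≤ β) (hβ1 : β ≤ 1) : a ^ β ≤ C * b ^ β := by
  have hb : 0 ≤ b := nonneg_of_mul_nonneg_right (ha.trans hab) (by linarith)
  calc a ^ β ≤ (C * b) ^ β := Real.rpow_le_rpow ha hab hβ0
    _ = C ^ β * b ^ β := Real.mul_rpow (by linarith) hb
    _ ≤ C * b ^ β :=
      mul_le_mul_of_nonneg_right (Real.rpow_le_self_of_one_le hC hβ1) (Real.rpow_nonneg hb _)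

section Gallager

variable {V Z : Type*} [Fintype V] [Fintype Z]

noncomputable def gallagerTerm (α β : ℝ) (W : V → Z → ℝ) (p : V → ℝ) : ℝ :=
  ∑ z, (∑ v, p v * W v z ^ α) ^ β

variable {W : V → Z → ℝ} {α β : ℝ} {p q : V → ℝ}

lemma gallagerTerm_nonneg (hW : ∀ v z, 0 ≤ W v z) (hp : ∀ v, 0 ≤ p v) :
    0 ≤ gallagerTerm α β W p :=
  sum_nonneg fun z _ => Real.rpow_nonneg
    (sum_nonneg fun v _ => mul_nonneg (hp v) (Real.rpow_nonneg (hW v z) _)) _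

lemma gallagerTerm_pos (hW : ∀ v z, 0 ≤ W v z) (hWsum : ∀ v, ∑ z, W v z = 1)
    (hp : ∀ v, 0 ≤ p v) (hpsum : ∑ v, p v = 1) : 0 < gallagerTerm α β W p := by
  obtain ⟨v, hv⟩ := exists_pos_of_sum_eq_one hpsum
  obtain ⟨z, hz⟩ := exists_pos_of_sum_eq_one (hWsum v)
  have hinner_nonneg : ∀ z, 0 ≤ ∑ v, p v * W v z ^ α := fun z =>
    sum_nonneg fun v _ => mul_nonneg (hp v) (Real.rpow_nonneg (hW v z) _)
  have hinner_pos : 0 < ∑ v, p v * W v z ^ α :=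
    sum_pos' (fun v _ => mul_nonneg (hp v) (Real.rpow_nonneg (hW v z) _))
      ⟨v, mem_univ v, mul_pos hv (Real.rpow_pos_of_pos hz _)⟩
  exact sum_pos' (fun z _ => Real.rpow_nonneg (hinner_nonneg z) _)
    ⟨z, mem_univ z, Real.rpow_pos_of_pos hinner_pos _⟩

lemma gallagerTerm_le_mul {C : ℝ} (hW : ∀ v z, 0 ≤ W v z) (hp : ∀ v, 0 ≤ p v)
    (hpq : ∀ v, p v ≤ C * q v) (hC : 1 ≤ C) (hβ0 : 0 ≤ β) (hβ1 : β ≤ 1) :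
    gallagerTerm α β W p ≤ C * gallagerTerm α β W q := by
  rw [gallagerTerm, gallagerTerm, mul_sum]
  refine sum_le_sum fun z _ => Real.rpow_le_mul_rpow_of_le_mul
    (sum_nonneg fun v _ => mul_nonneg (hp v) (Real.rpow_nonneg (hW v z) _)) ?_ hC hβ0 hβ1
  rw [mul_sum]
  exact sum_le_sum fun v _ => by
    rw [← mul_assoc]
    exact mul_le_mul_of_nonneg_right (hpq v) (Real.rpow_nonneg (hW v z) _)

lemma exp_avgPhi_eq {U : Type*} [Fintype U] (ρ : ℝ) (hW : ∀ v z, 0 ≤ W v z)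
    (hWsum : ∀ v, ∑ z, W v z = 1) {PU : U → ℝ} (hPU : ∀ u, 0 ≤ PU u) (hPUsum : ∑ u, PU u = 1)
    {PVU : U → V → ℝ} (hPVU : ∀ u v, 0 ≤ PVU u v) (hPVUsum : ∀ u, ∑ v, PVU u v = 1) :
    Real.exp (avgPhi ρ W PVU PU) = ∑ u, PU u * gallagerTerm (1 / (1 - ρ)) (1 - ρ) W (PVU u) := by
  obtain ⟨u, hu⟩ := exists_pos_of_sum_eq_one hPUsum
  exact Real.exp_log (sum_pos' (fun u _ => mul_nonneg (hPU u) (gallagerTerm_nonneg hW (hPVU u)))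
    ⟨u, mem_univ u, mul_pos hu (gallagerTerm_pos hW hWsum (hPVU u) (hPVUsum u))⟩)

end Gallager

theorem exp_avgPhi_le_of_le_general
    {U V Z : Type*} [Fintype U] [Fintype V] [Fintype Z]
    (W : V → Z → ℝ) (hWnn : ∀ v z, 0 ≤ W v z) (hWsum : ∀ v, ∑ z, W v z = 1)
    (PU QU : U → ℝ)
    (hPUnn : ∀ u, 0 ≤ PU u) (hPUsum : ∑ u, PU u = 1)
    (hQUnn : ∀ u, 0 ≤ QU u)
    (PVU QVU : U → V → ℝ)
    (hPVUnn : ∀ u v, 0 ≤ PVU u v) (hPVUsum : ∀ u, ∑ v, PVU u v = 1)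
    (hQVUnn : ∀ u v, 0 ≤ QVU u v) (hQVUsum : ∀ u, ∑ v, QVU u v = 1)
    (C₁ C₂ : ℝ) (hC₂ : 0 < C₂)
    (hVU : ∀ u, 0 < PU u → ∀ v, PVU u v ≤ C₁ * QVU u v)
    (hU : ∀ u, PU u ≤ C₂ * QU u)
    (ρ : ℝ) (hρ0 : 0 < ρ) (hρ1 : ρ < 1) :
    Real.exp (avgPhi ρ W PVU PU) ≤ C₁ * C₂ * Real.exp (avgPhi ρ W QVU QU) := by
  set E := fun R : U → V → ℝ => fun u => gallagerTerm (1 / (1 - ρ)) (1 - ρ) W (R u)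
  obtain ⟨u₀, hu₀⟩ := exists_pos_of_sum_eq_one hPUsum
  have hC₁ : 1 ≤ C₁ := one_le_of_le_mul_of_sum_eq_one (hPVUsum u₀) (hQVUsum u₀) (hVU u₀ hu₀)
  have hC : 0 ≤ C₁ * C₂ := mul_nonneg (by linarith) hC₂.le
  have hterm (u : U) : PU u * E PVU u ≤ C₁ * C₂ * (QU u * E QVU u) := by
    rcases (hPUnn u).eq_or_lt with hzero | hpos
    · rw [← hzero, zero_mul]
      exact mul_nonneg hC (mul_nonneg (hQUnn u) (gallagerTerm_nonneg hWnn (hQVUnn u)))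
    · calc PU u * E PVU u ≤ (C₂ * QU u) * (C₁ * E QVU u) :=
            mul_le_mul (hU u)
              (gallagerTerm_le_mul hWnn (hPVUnn u) (hVU u hpos) hC₁ (by linarith) (by linarith))
              (gallagerTerm_nonneg hWnn (hPVUnn u)) (hpos.le.trans (hU u))
        _ = C₁ * C₂ * (QU u * E QVU u) := by ring
  calc Real.exp (avgPhi ρ W PVU PU) = ∑ u, PU u * E PVU u :=
        exp_avgPhi_eq ρ hWnn hWsum hPUnn hPUsum hPVUnn hPVUsum
    _ ≤ ∑ u, C₁ * C₂ * (QU u * E QVU u) := sum_le_sum fun u _ => hterm u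
    _ = C₁ * C₂ * ∑ u, QU u * E QVU u := (mul_sum _ _ _).symm
    _ ≤ C₁ * C₂ * Real.exp (avgPhi ρ W QVU QU) := mul_le_mul_of_nonneg_left (Real.le_exp_log _) hC

/-- If `P_{V|U} ≤ C₁ Q_{V|U}` (on the support of `P_U`) and `P_U ≤ C₂ Q_U`, then
`exp(φ(ρ, W, P_{V|U}, P_U)) ≤ C₁ C₂ exp(φ(ρ, W, Q_{V|U}, Q_U))` for `0 < ρ < 1`. -/
theorem exp_avgPhi_le_of_le
    {U V Z : Type*} [Fintype U] [Fintype V] [Fintype Z]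
    [Nonempty U] [Nonempty V] [Nonempty Z]
    (W : V → Z → ℝ) (hWnn : ∀ v z, 0 ≤ W v z) (hWsum : ∀ v, ∑ z, W v z = 1)
    (PU QU : U → ℝ)
    (hPUnn : ∀ u, 0 ≤ PU u) (hPUsum : ∑ u, PU u = 1)
    (hQUnn : ∀ u, 0 ≤ QU u) (hQUsum : ∑ u, QU u = 1)
    (PVU QVU : U → V → ℝ)
    (hPVUnn : ∀ u v, 0 ≤ PVU u v) (hPVUsum : ∀ u, ∑ v, PVU u v = 1)
    (hQVUnn : ∀ u v, 0 ≤ QVU u v) (hQVUsum : ∀ u, ∑ v, QVU u v = 1)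
    (C₁ C₂ : ℝ) (hC₁ : 0 < C₁) (hC₂ : 0 < C₂)
    (hVU : ∀ u, 0 < PU u → ∀ v, PVU u v ≤ C₁ * QVU u v)
    (hU : ∀ u, PU u ≤ C₂ * QU u)
    (ρ : ℝ) (hρ0 : 0 < ρ) (hρ1 : ρ < 1) :
    Real.exp (avgPhi ρ W PVU PU) ≤ C₁ * C₂ * Real.exp (avgPhi ρ W QVU QU) :=
  exp_avgPhi_le_of_le_general W hWnn hWsum PU QU hPUnn hPUsum hQUnn PVU QVU hPVUnn hPVUsum hQVUnn
    hQVUsum C₁ C₂ hC₂ hVU hU ρ hρ0 hρ1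
end
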